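/- Let ‖·‖_{♭(ρ)} be the dual norm of ‖M‖_{♯(ρ)} := max{ρ‖M‖_{1→1}, ρ^{-1}‖M‖_{∞→∞}} with respect to the trace inner product ⟨A,B⟩ = tr(AᵀB). Then for any matrix M ∈ ℝ^{m×n} and ρ > 0, ‖M‖_{♭(ρ)} ≤ ‖M‖_*, where ‖M‖_* is the trace (nuclear) norm. -/

import Mathlib

/-!
Let `V` be an orthogonal matrix diagonalising `MᵀM`, so that the columns of `MV` have the
singular values `σⱼ` of `M` as norms. Then
`⟨M, N⟩ = ⟨MV, NV⟩ = ∑ⱼ ⟨(MV)ⱼ, N vⱼ⟩ ≤ ∑ⱼ σⱼ ‖N vⱼ‖ ≤ ‖N‖_{2→2} ‖M‖_*`,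
and by the Schur test
`‖N‖_{2→2}² ≤ ‖N‖_{1→1} ‖N‖_{∞→∞} = (ρ ‖N‖_{1→1}) (ρ⁻¹ ‖N‖_{∞→∞}) ≤ ‖N‖_{♯(ρ)}²`.
-/

open scoped BigOperators
open Matrix
noncomputable section

namespace SLR

/-- Trace inner product `⟨A,B⟩ = tr(AᵀB)`. -/
def inner' {m n : ℕ} (A B : Matrix (Fin m) (Fin n) ℝ) : ℝ := ∑ i, ∑ j, A i j * B i j

/-- Entrywise 1-norm. -/
def l1 {m n : ℕ} (M : Matrix (Fin m) (Fin n) ℝ) : ℝ := ∑ i, ∑ j, |M i j|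

/-- Entrywise ∞-norm (maximum absolute value of an entry). -/
def linf {m n : ℕ} (M : Matrix (Fin m) (Fin n) ℝ) : ℝ := ⨆ i, ⨆ j, |M i j|

/-- Frobenius norm. -/
def frob {m n : ℕ} (M : Matrix (Fin m) (Fin n) ℝ) : ℝ :=
  Real.sqrt (∑ i, ∑ j, (M i j) ^ 2)

/-- `‖M‖_{1→1}`: maximum column absolute sum. -/
def n11 {m n : ℕ} (M : Matrix (Fin m) (Fin n) ℝ) : ℝ := ⨆ j, ∑ i, |M i j|

/-- `‖M‖_{∞→∞}`: maximum row absolute sum. -/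
def nII {m n : ℕ} (M : Matrix (Fin m) (Fin n) ℝ) : ℝ := ⨆ i, ∑ j, |M i j|

/-- Spectral norm `‖M‖_{2→2}`. -/
def spec {m n : ℕ} (M : Matrix (Fin m) (Fin n) ℝ) : ℝ :=
  ‖LinearMap.toContinuousLinearMap (Matrix.toEuclideanLin M)‖

/-- Trace (nuclear) norm: sum of singular values. -/
def traceNorm {m n : ℕ} (M : Matrix (Fin m) (Fin n) ℝ) : ℝ :=
  ∑ i, Real.sqrt ((Matrix.isHermitian_conjTranspose_mul_self M).eigenvalues i)

/-- The hybrid norm `‖M‖_{♯(ρ)} = max{ρ‖M‖_{1→1}, ρ⁻¹‖M‖_{∞→∞}}`. -/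
def sharp {m n : ℕ} (ρ : ℝ) (M : Matrix (Fin m) (Fin n) ℝ) : ℝ :=
  max (ρ * n11 M) (ρ⁻¹ * nII M)

/-- The dual norm `‖·‖_{♭(ρ)}` of `‖·‖_{♯(ρ)}`. -/
def flat {m n : ℕ} (ρ : ℝ) (M : Matrix (Fin m) (Fin n) ℝ) : ℝ :=
  sSup {x : ℝ | ∃ N : Matrix (Fin m) (Fin n) ℝ, sharp ρ N ≤ 1 ∧ x = inner' M N}

/-- Induced operator norm of a map `T` with respect to the norm `f`. -/
def opNormWrt {m n : ℕ} (f : Matrix (Fin m) (Fin n) ℝ → ℝ)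
    (T : Matrix (Fin m) (Fin n) ℝ → Matrix (Fin m) (Fin n) ℝ) : ℝ :=
  sSup {x : ℝ | ∃ M, f M ≤ 1 ∧ x = f (T M)}

/-- Entrywise sign matrix. -/
def signM {m n : ℕ} (M : Matrix (Fin m) (Fin n) ℝ) : Matrix (Fin m) (Fin n) ℝ :=
  Matrix.of fun i j => Real.sign (M i j)

/-- Orthogonal projection onto matrices supported on `supp X`. -/
def POmega {m n : ℕ} (X : Matrix (Fin m) (Fin n) ℝ) (M : Matrix (Fin m) (Fin n) ℝ) :
    Matrix (Fin m) (Fin n) ℝ :=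
  Matrix.of fun i j => if X i j ≠ 0 then M i j else 0

/-- Orthogonal projection onto the tangent space `T` determined by `U`, `V`. -/
def PT {m n r : ℕ} (U : Matrix (Fin m) (Fin r) ℝ) (V : Matrix (Fin n) (Fin r) ℝ)
    (M : Matrix (Fin m) (Fin n) ℝ) : Matrix (Fin m) (Fin n) ℝ :=
  U * Uᵀ * M + M * (V * Vᵀ) - U * Uᵀ * M * (V * Vᵀ)

/-- `‖U‖_{2→∞}`: maximum row Euclidean norm. -/
def two2inf {m r : ℕ} (U : Matrix (Fin m) (Fin r) ℝ) : ℝ :=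
  ⨆ i, Real.sqrt (∑ k, (U i k) ^ 2)

/-- The sparsity measure `α(ρ)` of `X̄_S`. -/
def alpha {m n : ℕ} (X : Matrix (Fin m) (Fin n) ℝ) (ρ : ℝ) : ℝ :=
  max (ρ * n11 (signM X)) (ρ⁻¹ * nII (signM X))

/-- The incoherence measure `β(ρ)` of the singular vectors `U`, `V`. -/
def beta {m n r : ℕ} (U : Matrix (Fin m) (Fin r) ℝ) (V : Matrix (Fin n) (Fin r) ℝ)
    (ρ : ℝ) : ℝ :=
  ρ⁻¹ * linf (U * Uᵀ) + ρ * linf (V * Vᵀ) + two2inf U * two2inf V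

/-- Number of nonzero entries. -/
def suppCard {m n : ℕ} (X : Matrix (Fin m) (Fin n) ℝ) : ℕ :=
  (Finset.univ.filter fun p : Fin m × Fin n => X p.1 p.2 ≠ 0).card

open Finset

section

variable {m n : ℕ}

theorem sum_abs_col_le_n11 (N : Matrix (Fin m) (Fin n) ℝ) (j : Fin n) : ∑ i, |N i j| ≤ n11 N :=
  le_ciSup (f := fun j => ∑ i, |N i j|) (Set.finite_range _).bddAbove j

theorem sum_abs_row_le_nII (N : Matrix (Fin m) (Fin n) ℝ) (i : Fin m) : ∑ j, |N i j| ≤ nII N :=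
  le_ciSup (f := fun i => ∑ j, |N i j|) (Set.finite_range _).bddAbove i

theorem n11_nonneg (N : Matrix (Fin m) (Fin n) ℝ) : 0 ≤ n11 N :=
  Real.iSup_nonneg fun _ => sum_nonneg fun _ _ => abs_nonneg _

theorem nII_nonneg (N : Matrix (Fin m) (Fin n) ℝ) : 0 ≤ nII N :=
  Real.iSup_nonneg fun _ => sum_nonneg fun _ _ => abs_nonneg _

/-- Schur test. -/
theorem sum_sq_mulVec_le_n11_mul_nII (N : Matrix (Fin m) (Fin n) ℝ) (x : Fin n → ℝ) :
    ∑ i, (N *ᵥ x) i ^ 2 ≤ n11 N * nII N * ∑ j, x j ^ 2 := by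
  have row (i : Fin m) : (∑ j, N i j * x j) ^ 2 ≤ (∑ j, |N i j|) * ∑ j, |N i j| * x j ^ 2 :=
    sum_sq_le_sum_mul_sum_of_sq_le_mul univ (fun _ _ => abs_nonneg _) (fun _ _ => by positivity)
      fun j _ => le_of_eq <| by rw [mul_pow, ← sq_abs (N i j)]; ring
  calc ∑ i, (N *ᵥ x) i ^ 2 ≤ ∑ i, nII N * ∑ j, |N i j| * x j ^ 2 :=
        sum_le_sum fun i _ => (row i).trans <| by gcongr; exact sum_abs_row_le_nII N i
    _ = nII N * ∑ j, (∑ i, |N i j|) * x j ^ 2 := by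
        rw [← mul_sum, sum_comm]; simp_rw [sum_mul]
    _ ≤ nII N * ∑ j, n11 N * x j ^ 2 := by
        have hnII := nII_nonneg N
        gcongr with j
        exact sum_abs_col_le_n11 N j
    _ = n11 N * nII N * ∑ j, x j ^ 2 := by
        rw [mul_sum, mul_sum]; exact sum_congr rfl fun _ _ => by ring

theorem spec_le_sqrt_n11_mul_nII (N : Matrix (Fin m) (Fin n) ℝ) : spec N ≤ √(n11 N * nII N) := by
  refine ContinuousLinearMap.opNorm_le_bound _ (Real.sqrt_nonneg _) fun v => ?_
  rw [EuclideanSpace.norm_eq, EuclideanSpace.norm_eq,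
    ← Real.sqrt_mul (mul_nonneg (n11_nonneg N) (nII_nonneg N))]
  gcongr
  simpa using sum_sq_mulVec_le_n11_mul_nII N v

theorem sharp_nonneg (N : Matrix (Fin m) (Fin n) ℝ) {ρ : ℝ} (hρ : 0 < ρ) : 0 ≤ sharp ρ N :=
  (mul_nonneg hρ.le (n11_nonneg N)).trans (le_max_left _ _)

theorem n11_mul_nII_le_sharp_sq (N : Matrix (Fin m) (Fin n) ℝ) {ρ : ℝ} (hρ : 0 < ρ) :
    n11 N * nII N ≤ sharp ρ N ^ 2 := by
  calc n11 N * nII N = (ρ * n11 N) * (ρ⁻¹ * nII N) := by field_simp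
    _ ≤ sharp ρ N * sharp ρ N :=
        mul_le_mul (le_max_left _ _) (le_max_right _ _)
          (mul_nonneg (inv_nonneg.2 hρ.le) (nII_nonneg N)) (sharp_nonneg N hρ)
    _ = sharp ρ N ^ 2 := (sq _).symm

theorem spec_le_sharp (N : Matrix (Fin m) (Fin n) ℝ) {ρ : ℝ} (hρ : 0 < ρ) :
    spec N ≤ sharp ρ N :=
  (spec_le_sqrt_n11_mul_nII N).trans <|
    (Real.sqrt_le_left (sharp_nonneg N hρ)).2 (n11_mul_nII_le_sharp_sq N hρ)

theorem sqrt_sum_sq_mulVec_le_spec_mul (N : Matrix (Fin m) (Fin n) ℝ) (x : Fin n → ℝ) :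
    √(∑ i, (N *ᵥ x) i ^ 2) ≤ spec N * √(∑ j, x j ^ 2) := by
  simpa [spec, EuclideanSpace.norm_eq] using
    (LinearMap.toContinuousLinearMap (toEuclideanLin N)).le_opNorm (WithLp.toLp 2 x)

theorem inner'_eq_trace (A B : Matrix (Fin m) (Fin n) ℝ) : inner' A B = trace (Aᵀ * B) := by
  simp only [inner', trace, Matrix.diag, mul_apply, transpose_apply]
  exact sum_comm

theorem inner'_mul_of_mul_transpose_eq_one (A B : Matrix (Fin m) (Fin n) ℝ)
    {V : Matrix (Fin n) (Fin n) ℝ} (hV : V * Vᵀ = 1) : inner' (A * V) (B * V) = inner' A B := by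
  rw [inner'_eq_trace, inner'_eq_trace, transpose_mul, Matrix.mul_assoc, trace_mul_comm,
    Matrix.mul_assoc, Matrix.mul_assoc, hV, Matrix.mul_one]

theorem sum_sq_col_eq_one {V : Matrix (Fin n) (Fin n) ℝ} (hV : Vᵀ * V = 1) (j : Fin n) :
    ∑ k, V k j ^ 2 = 1 := by
  simpa [mul_apply, sq] using congr_fun (congr_fun hV j) j

theorem sum_sq_col_mul_eq_of_transpose_mul_mul_eq_diagonal (M : Matrix (Fin m) (Fin n) ℝ)
    {V : Matrix (Fin n) (Fin n) ℝ} {d : Fin n → ℝ} (hV : Vᵀ * (Mᵀ * M) * V = diagonal d)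
    (j : Fin n) : ∑ i, (M * V) i j ^ 2 = d j := by
  have hcol : ((M * V)ᵀ * (M * V)) j j = d j := by
    rw [transpose_mul, ← Matrix.mul_assoc, Matrix.mul_assoc Vᵀ, hV, diagonal_apply_eq]
  simpa [mul_apply, sq, mul_comm] using hcol

theorem inner'_le_spec_mul_traceNorm (M N : Matrix (Fin m) (Fin n) ℝ) :
    inner' M N ≤ spec N * traceNorm M := by
  set hA := isHermitian_conjTranspose_mul_self M
  set V : Matrix (Fin n) (Fin n) ℝ := ↑hA.eigenvectorUnitary
  have hVVt : V * Vᵀ = 1 := by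
    rw [← conjTranspose_eq_transpose_of_trivial V]
    exact mem_unitaryGroup_iff.1 hA.eigenvectorUnitary.2
  have hVtV : Vᵀ * V = 1 := by
    rw [← conjTranspose_eq_transpose_of_trivial V]
    exact mem_unitaryGroup_iff'.1 hA.eigenvectorUnitary.2
  have hdiag : Vᵀ * (Mᵀ * M) * V = diagonal hA.eigenvalues := by
    rw [← conjTranspose_eq_transpose_of_trivial M, ← conjTranspose_eq_transpose_of_trivial V]
    exact hA.conjStarAlgAut_star_eigenvectorUnitary
  have hNV (j : Fin n) : √(∑ i, (N * V) i j ^ 2) ≤ spec N := by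
    have h := sqrt_sum_sq_mulVec_le_spec_mul N (fun k => V k j)
    rwa [sum_sq_col_eq_one hVtV j, Real.sqrt_one, mul_one] at h
  calc inner' M N = ∑ j, ∑ i, (M * V) i j * (N * V) i j := by
        rw [← inner'_mul_of_mul_transpose_eq_one M N hVVt, inner', sum_comm]
    _ ≤ ∑ j, √(∑ i, (M * V) i j ^ 2) * √(∑ i, (N * V) i j ^ 2) :=
        sum_le_sum fun j _ => Real.sum_mul_le_sqrt_mul_sqrt _ _ _
    _ = ∑ j, √(hA.eigenvalues j) * √(∑ i, (N * V) i j ^ 2) := by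
        simp_rw [sum_sq_col_mul_eq_of_transpose_mul_mul_eq_diagonal M hdiag]
    _ ≤ ∑ j, √(hA.eigenvalues j) * spec N := by gcongr with j; exact hNV j
    _ = spec N * traceNorm M := by
        rw [traceNorm, mul_sum]; exact sum_congr rfl fun _ _ => mul_comm _ _

end

/-- the dual norm ♭(ρ) is bounded by the trace norm. -/
theorem flat_le_traceNorm {m n : ℕ} (M : Matrix (Fin m) (Fin n) ℝ) (ρ : ℝ) (hρ : 0 < ρ) :
    flat ρ M ≤ traceNorm M := by
  have htraceNorm : 0 ≤ traceNorm M := sum_nonneg fun _ _ => Real.sqrt_nonneg _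
  refine Real.sSup_le ?_ htraceNorm
  rintro _ ⟨N, hN, rfl⟩
  calc inner' M N ≤ spec N * traceNorm M := inner'_le_spec_mul_traceNorm M N
    _ ≤ 1 * traceNorm M := by gcongr; exact (spec_le_sharp N hρ).trans hN
    _ = traceNorm M := one_mul _

end SLR
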